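/- arXiv:1507.08841 — 6 statements merged into one kernel-verified Lean document; each statement's English description precedes it below -/
import Mathlib

section
/- Let Γ be a group acting on a set X. If Y_1,…,Y_n are subsets of X none of which is Γ-finite (i.e., each has infinite orbit under the induced action of Γ on subsets), then there exists g ∈ Γ such that g·Y_i ≠ Y_j for all 1 ≤ i, j ≤ n. -/
open scoped Pointwise

/-!
For a group `G` acting on `α`, the elements `g` with `g • a = b` form either the empty set or a
left coset of the stabilizer of `a`. If every `g` sent one of finitely many points `aᵢ` to one of
finitely many points `bⱼ`, then `G` would be covered by finitely many left cosets of the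
stabilizers of the `aᵢ`; by B. H. Neumann's lemma one of these stabilizers has finite index, so
the corresponding orbit is finite. Apply this to the action of `Γ` on subsets of `X`.
-/

namespace MulAction

variable {G α : Type*} [Group G] [MulAction G α]

theorem orbit_finite_of_finiteIndex_stabilizer {a : α} (h : (stabilizer G a).FiniteIndex) :
    (orbit G a).Finite :=
  Set.finite_of_ncard_ne_zero (index_stabilizer G a ▸ h.index_ne_zero)

theorem mem_smul_stabilizer_of_smul_eq {a b : α} {g h : G} (hg : g • a = b) (hh : h • a = b) :
    h ∈ g • (stabilizer G a : Set G) := by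
  rw [mem_leftCoset_iff, SetLike.mem_coe, mem_stabilizer_iff, mul_smul, hh, ← hg, inv_smul_smul]

theorem exists_smul_ne_of_orbit_infinite {ι κ : Type*} [Finite ι] [Finite κ]
    (a : ι → α) (b : κ → α) (ha : ∀ i, (orbit G (a i)).Infinite) :
    ∃ g : G, ∀ i j, g • a i ≠ b j := by
  have := Fintype.ofFinite ι
  have := Fintype.ofFinite κ
  by_contra! hmeets
  let c : ι × κ → G := fun p => Classical.epsilon fun g => g • a p.1 = b p.2
  have hcovers :
      ⋃ p ∈ (Finset.univ : Finset (ι × κ)), c p • (stabilizer G (a p.1) : Set G) = Set.univ := by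
    refine Set.eq_univ_of_forall fun g => ?_
    obtain ⟨i, j, hg⟩ := hmeets g
    have hc : c (i, j) • a i = b j := Classical.epsilon_spec (p := fun h => h • a i = b j) ⟨g, hg⟩
    exact Set.mem_biUnion (Finset.mem_coe.2 (Finset.mem_univ (i, j)))
      (mem_smul_stabilizer_of_smul_eq hc hg)
  obtain ⟨p, -, hp⟩ := Subgroup.exists_finiteIndex_of_leftCoset_cover hcovers
  exact ha p.1 (orbit_finite_of_finiteIndex_stabilizer hp)

end MulAction

/-- If `Γ` acts on `X` and `Y₁, …, Yₙ` are subsets of `X` none of which has finite orbit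
under the induced action of `Γ` on subsets, then there is `g ∈ Γ` with `g • Yᵢ ≠ Yⱼ`
for all `i, j`. -/
theorem exists_translate_ne {Γ X : Type*} [Group Γ] [MulAction Γ X] {n : ℕ}
    (Y : Fin n → Set X)
    (hY : ∀ i, (Set.range fun g : Γ => g • Y i).Infinite) :
    ∃ g : Γ, ∀ i j, g • Y i ≠ Y j :=
  MulAction.exists_smul_ne_of_orbit_infinite Y Y hY
end

section
/- Let X be a Noetherian topological space and Γ a group acting on X by homeomorphisms. Let f be a function from the set of closed subsets of X to [0,1] satisfying: (I) if Z ⊆ Y are closed subsets of X then f(Z) ≤ f(Y); and (II) for all closed Y ⊆ X and all g ∈ Γ with f(Y ∩ g·Y) = 0, one has f(Y ∪ g·Y) ≥ 2·f(Y). If a closed subset Y ⊆ X Γ-covers some closed subset W ⊆ X with f(W) > 0, then Y Γ-covers some closed Γ-stable subset Z ⊆ X with f(Z) > 0. -/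
/-!
Suppose every closed `Γ`-stable set covered by `Y` is `f`-null. Rank closed sets by their
height in the well-founded poset of closed subsets, minimized over `Γ`-translates, and call a
set `ξ`-small if it lies in the union of a closed `Γ`-stable set covered by `Y` and finitely
many closed sets covered by `Y` of rank `< ξ`. By induction on `ξ`, every closed `ξ`-small set
`B` covered by `Y` is `f`-null, in particular `W`. Every finite union `U` of translates of `B`
is small as well, and by B. H. Neumann's lemma on coset covers of groups some `g ∈ Γ`
satisfies `g • C' ≠ C` for all pieces `C, C'` of `U` such that `C'` has an infinite orbit.
The pieces `C ∩ g • C'` then have smaller rank, and the pieces with finite orbit are absorbed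
into a larger stable set, so `f (U ∩ g • U) = 0`. Now (II) doubles `f` from `U` to
`U ∪ g • U`, and iterating contradicts `f ≤ 1`.
-/

open scoped Pointwise

/-- `Z` is `Γ`-covered by `Y` if `Z` is closed and contained in a finite union of
`Γ`-translates of `Y`. -/
def GammaCovers (Γ : Type*) {X : Type*} [Group Γ] [MulAction Γ X] [TopologicalSpace X]
    (Y Z : Set X) : Prop :=
  IsClosed Z ∧ ∃ s : Finset Γ, Z ⊆ ⋃ g ∈ s, g • Y

open Set MulAction TopologicalSpace

namespace GammaCovers

variable {Γ X : Type*} [Group Γ] [MulAction Γ X] [TopologicalSpace X] {Y Z : Set X}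

theorem self (hY : IsClosed Y) : GammaCovers Γ Y Y :=
  ⟨hY, {1}, by simp⟩

theorem empty : GammaCovers Γ Y ∅ :=
  ⟨isClosed_empty, ∅, empty_subset _⟩

theorem mono {Z' : Set X} (hZ : GammaCovers Γ Y Z) (hZ' : IsClosed Z') (h : Z' ⊆ Z) :
    GammaCovers Γ Y Z' :=
  ⟨hZ', hZ.2.imp fun _ hs => h.trans hs⟩

theorem union {Z' : Set X} (hZ : GammaCovers Γ Y Z) (hZ' : GammaCovers Γ Y Z') :
    GammaCovers Γ Y (Z ∪ Z') := by
  classical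
  obtain ⟨hZc, s, hs⟩ := hZ
  obtain ⟨hZ'c, t, ht⟩ := hZ'
  refine ⟨hZc.union hZ'c, s ∪ t, ?_⟩
  rw [Finset.set_biUnion_union]
  exact union_subset_union hs ht

theorem biUnion {ι : Type*} {s : Set ι} (hs : s.Finite) {Z : ι → Set X}
    (h : ∀ i ∈ s, GammaCovers Γ Y (Z i)) : GammaCovers Γ Y (⋃ i ∈ s, Z i) := by
  induction s, hs using Set.Finite.induction_on with
  | empty => simpa using empty
  | insert _ _ ih =>
    rw [biUnion_insert]
    exact (h _ (mem_insert _ _)).union (ih fun i hi => h i (mem_insert_of_mem _ hi))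

variable [ContinuousConstSMul Γ X]

theorem smul (hZ : GammaCovers Γ Y Z) (g : Γ) : GammaCovers Γ Y (g • Z) := by
  classical
  obtain ⟨hZc, s, hs⟩ := hZ
  refine ⟨hZc.smul g, s.image (g * ·), ?_⟩
  calc g • Z ⊆ g • ⋃ a ∈ s, a • Y := smul_set_mono hs
    _ = ⋃ a ∈ s.image (g * ·), a • Y := by
      rw [Finset.set_biUnion_finset_image, smul_set_iUnion₂]; simp only [mul_smul]

theorem trans {U : Set X} (hZ : GammaCovers Γ Y Z) (hU : GammaCovers Γ Z U) :
    GammaCovers Γ Y U := by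
  obtain ⟨hUc, s, hs⟩ := hU
  exact (biUnion s.finite_toSet fun a _ => hZ.smul a).mono hUc hs

theorem sUnion_orbit (hZ : GammaCovers Γ Y Z) (hfin : (orbit Γ Z).Finite) :
    GammaCovers Γ Y (⋃₀ orbit Γ Z) :=
  sUnion_eq_biUnion ▸ biUnion hfin fun _ ⟨g, hg⟩ => hg ▸ hZ.smul g

end GammaCovers

theorem smul_sUnion_orbit {Γ α : Type*} [Group Γ] [MulAction Γ α] (g : Γ) (A : Set α) :
    g • ⋃₀ orbit Γ A = ⋃₀ orbit Γ A := by
  rw [smul_set_sUnion, ← sUnion_image]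
  exact congrArg sUnion (smul_orbit g A)

theorem finite_orbit_of_finiteIndex_stabilizer {Γ α : Type*} [Group Γ] [MulAction Γ α] {a : α}
    [(stabilizer Γ a).FiniteIndex] : (orbit Γ a).Finite :=
  finite_of_ncard_ne_zero (index_stabilizer Γ a ▸ Subgroup.FiniteIndex.index_ne_zero)

theorem exists_smul_ne_of_infinite_orbit {Γ α : Type*} [Group Γ] [MulAction Γ α]
    {P : Set (α × α)} (hP : P.Finite) (hinf : ∀ p ∈ P, (orbit Γ p.2).Infinite) :
    ∃ g : Γ, ∀ p ∈ P, g • p.2 ≠ p.1 := by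
  by_contra! hcover
  have : ∀ p : α × α, ∃ h : Γ, p.1 ∈ orbit Γ p.2 → h • p.2 = p.1 := fun p =>
    (em (p.1 ∈ orbit Γ p.2)).elim (fun ⟨h, hp⟩ => ⟨h, fun _ => hp⟩)
      fun hp => ⟨1, (absurd · hp)⟩
  choose h hh using this
  have hunion : ⋃ p ∈ hP.toFinset, h p • (stabilizer Γ p.2 : Set Γ) = univ := by
    refine eq_univ_of_forall fun g => ?_
    obtain ⟨p, hp, hgp⟩ := hcover g
    refine mem_biUnion (hP.mem_toFinset.2 hp) ?_
    rw [mem_smul_set_iff_inv_smul_mem, SetLike.mem_coe, mem_stabilizer_iff, smul_eq_mul,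
      mul_smul, hgp, ← hh p ⟨g, hgp⟩, inv_smul_smul]
  obtain ⟨p, hp, hfi⟩ := Subgroup.exists_finiteIndex_of_leftCoset_cover hunion
  exact hinf p (hP.mem_toFinset.1 hp) finite_orbit_of_finiteIndex_stabilizer

section Rank

variable {Γ X : Type*} [Group Γ] [MulAction Γ X] [TopologicalSpace X] [NoetherianSpace X]
  {A B : Set X}

noncomputable def closedsRank (A : Set X) : Ordinal :=
  IsWellFounded.rank (α := Closeds X) (· < ·) ⟨closure A, isClosed_closure⟩

theorem closedsRank_lt (hA : IsClosed A) (hB : IsClosed B) (h : A ⊂ B) :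
    closedsRank A < closedsRank B := by
  apply IsWellFounded.rank_lt_of_rel
  rw [← SetLike.coe_ssubset_coe]
  simpa only [Closeds.coe_mk, hA.closure_eq, hB.closure_eq] using h

variable (Γ) in
noncomputable def orbitRank (A : Set X) : Ordinal :=
  ⨅ g : Γ, closedsRank (g • A)

theorem orbitRank_smul (g : Γ) (A : Set X) : orbitRank Γ (g • A) = orbitRank Γ A := by
  simp only [orbitRank, smul_smul]
  exact (Equiv.mulRight g).iInf_comp (g := fun h => closedsRank (h • A))

variable [ContinuousConstSMul Γ X]

theorem orbitRank_lt (hA : IsClosed A) (hB : IsClosed B) (h : A ⊂ B) :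
    orbitRank Γ A < orbitRank Γ B := by
  obtain ⟨g, hg⟩ := ciInf_mem fun g : Γ => closedsRank (g • B)
  calc orbitRank Γ A ≤ closedsRank (g • A) := ciInf_le' _ g
    _ < closedsRank (g • B) :=
      closedsRank_lt (hA.smul g) (hB.smul g) ((MulAction.injective g).image_strictMono h)
    _ = orbitRank Γ B := hg

theorem orbitRank_inter_lt (hA : IsClosed A) (hB : IsClosed B) (h : A ≠ B) :
    orbitRank Γ (A ∩ B) < max (orbitRank Γ A) (orbitRank Γ B) := by
  by_cases hAB : A ∩ B = A
  · have hne : A ∩ B ≠ B := fun hB' => h (hAB.symm.trans hB')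
    exact lt_max_of_lt_right
      (orbitRank_lt (hA.inter hB) hB (inter_subset_right.ssubset_of_ne hne))
  · exact lt_max_of_lt_left
      (orbitRank_lt (hA.inter hB) hA (inter_subset_left.ssubset_of_ne hAB))

end Rank

section Small

variable {Γ X : Type*} [Group Γ] [MulAction Γ X] [TopologicalSpace X] [NoetherianSpace X]
  {Y A : Set X} {ξ : Ordinal}

variable (Γ) in
def IsRankSmall (Y : Set X) (ξ : Ordinal) (A : Set X) : Prop :=
  ∃ (S : Set X) (L : Set (Set X)), GammaCovers Γ Y S ∧ (∀ g : Γ, g • S = S) ∧ L.Finite ∧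
    (∀ C ∈ L, GammaCovers Γ Y C ∧ orbitRank Γ C < ξ) ∧ A ⊆ S ∪ ⋃₀ L

theorem IsRankSmall.subset_stable_or_exists_succ_lt (h : IsRankSmall Γ Y ξ A) :
    (∃ S, GammaCovers Γ Y S ∧ (∀ g : Γ, g • S = S) ∧ A ⊆ S) ∨
      ∃ ξ' < ξ, IsRankSmall Γ Y (Order.succ ξ') A := by
  obtain ⟨S, L, hS, hSst, hL, hLY, hAS⟩ := h
  rcases L.eq_empty_or_nonempty with rfl | hne
  · exact Or.inl ⟨S, hS, hSst, by simpa using hAS⟩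
  obtain ⟨C, hC, hmax⟩ := exists_max_image L (orbitRank Γ) hL hne
  exact Or.inr ⟨orbitRank Γ C, (hLY C hC).2, S, L, hS, hSst, hL,
    fun C' hC' => ⟨(hLY C' hC').1, Order.lt_succ_iff.2 (hmax C' hC')⟩, hAS⟩

variable [ContinuousConstSMul Γ X]

theorem IsRankSmall.of_gammaCovers {U : Set X} (hA : IsRankSmall Γ Y ξ A)
    (hU : GammaCovers Γ A U) : IsRankSmall Γ Y ξ U := by
  obtain ⟨S, L, hS, hSst, hL, hLY, hAS⟩ := hA
  obtain ⟨-, s, hs⟩ := hU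
  refine ⟨S, (s : Set Γ) • L, hS, hSst, s.finite_toSet.smul hL, ?_, fun x hx => ?_⟩
  · rintro _ ⟨a, -, C, hC, rfl⟩
    exact ⟨(hLY C hC).1.smul a, (orbitRank_smul a C).symm ▸ (hLY C hC).2⟩
  obtain ⟨a, ha, y, hy, rfl⟩ : ∃ a ∈ s, ∃ y ∈ A, a • y = x := by
    simpa [mem_smul_set] using hs hx
  rcases hAS hy with hyS | ⟨C, hC, hyC⟩
  · exact Or.inl (hSst a ▸ smul_mem_smul_set hyS)
  · exact Or.inr ⟨a • C, smul_mem_smul ha hC, smul_mem_smul_set hyC⟩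

theorem IsRankSmall.exists_inter_smul (h : IsRankSmall Γ Y (Order.succ ξ) A) :
    ∃ g : Γ, IsRankSmall Γ Y ξ (A ∩ g • A) := by
  obtain ⟨S, L, hS, hSst, hL, hLY, hAS⟩ := h
  set P : Set (Set X × Set X) := {p ∈ L ×ˢ L | (orbit Γ p.2).Infinite}
  have hP : P.Finite := (hL.prod hL).subset (sep_subset _ _)
  obtain ⟨g, hg⟩ := exists_smul_ne_of_infinite_orbit (Γ := Γ) hP fun p hp => hp.2
  refine ⟨g, S ∪ ⋃ C ∈ {C ∈ L | (orbit Γ C).Finite}, ⋃₀ orbit Γ C,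
    (fun p => p.1 ∩ g • p.2) '' P, ?_, fun h => ?_, ?_, ?_, ?_⟩
  · exact hS.union <| .biUnion (hL.subset (sep_subset _ _)) fun C hC =>
      (hLY C hC.1).1.sUnion_orbit hC.2
  · simp only [smul_set_union, smul_set_iUnion₂, hSst, smul_sUnion_orbit]
  · exact hP.image _
  · rintro _ ⟨⟨C, C'⟩, hp, rfl⟩
    have hne : g • C' ≠ C := hg _ hp
    obtain ⟨⟨hC, hC'⟩, -⟩ := hp
    have hCc := (hLY C hC).1.1
    have hC'c := (hLY C' hC').1.1.smul g
    refine ⟨(hLY C hC).1.mono (hCc.inter hC'c) inter_subset_left, ?_⟩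
    calc orbitRank Γ (C ∩ g • C') < max (orbitRank Γ C) (orbitRank Γ (g • C')) :=
          orbitRank_inter_lt hCc hC'c hne.symm
      _ ≤ ξ := by
          rw [orbitRank_smul]
          exact max_le (Order.le_of_lt_succ (hLY C hC).2) (Order.le_of_lt_succ (hLY C' hC').2)
  · rintro x ⟨hxA, hxgA⟩
    have hxg : x ∈ S ∪ ⋃ C' ∈ L, g • C' := by
      simpa only [smul_set_union, hSst, smul_set_sUnion] using smul_set_mono hAS hxgA
    rcases hAS hxA with hxS | ⟨C, hC, hxC⟩
    · exact Or.inl (Or.inl hxS)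
    rcases hxg with hxS | hx
    · exact Or.inl (Or.inl hxS)
    obtain ⟨C', hC', hxC'⟩ := mem_iUnion₂.1 hx
    by_cases hinf : (orbit Γ C').Infinite
    · exact Or.inr ⟨C ∩ g • C', ⟨(C, C'), ⟨⟨hC, hC'⟩, hinf⟩, rfl⟩, hxC, hxC'⟩
    · exact Or.inl <| Or.inr <|
        mem_biUnion ⟨hC', not_infinite.1 hinf⟩ ⟨g • C', ⟨g, rfl⟩, hxC'⟩

end Small

theorem nonpos_of_forall_exists_null_inter_smul {Γ X : Type*} [Group Γ] [MulAction Γ X]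
    [TopologicalSpace X] [ContinuousConstSMul Γ X] (f : Set X → ℝ)
    (hf1 : ∀ A : Set X, IsClosed A → f A ≤ 1)
    (hII : ∀ (A : Set X) (g : Γ), IsClosed A → f (A ∩ g • A) = 0 → 2 * f A ≤ f (A ∪ g • A))
    {B : Set X} (hB : IsClosed B) (h : ∀ U, GammaCovers Γ B U → ∃ g : Γ, f (U ∩ g • U) = 0) :
    f B ≤ 0 := by
  have hgrow : ∀ k : ℕ, ∃ U, GammaCovers Γ B U ∧ 2 ^ k * f B ≤ f U := by
    intro k
    induction k with
    | zero => exact ⟨B, .self hB, by simp⟩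
    | succ k ih =>
      obtain ⟨U, hU, hfU⟩ := ih
      obtain ⟨g, hg⟩ := h U hU
      refine ⟨U ∪ g • U, hU.union (hU.smul g), ?_⟩
      calc 2 ^ (k + 1) * f B = 2 * (2 ^ k * f B) := by ring
        _ ≤ 2 * f U := by linarith
        _ ≤ f (U ∪ g • U) := hII U g hU.1 hg
  by_contra! hpos
  obtain ⟨k, hk⟩ := pow_unbounded_of_one_lt (f B)⁻¹ one_lt_two
  obtain ⟨U, hU, hfU⟩ := hgrow k
  have := hf1 U hU.1
  have := (inv_lt_iff_one_lt_mul₀ hpos).1 hk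
  linarith

theorem eq_zero_of_isRankSmall {Γ X : Type*} [Group Γ] [MulAction Γ X] [TopologicalSpace X]
    [NoetherianSpace X] [ContinuousConstSMul Γ X] (f : Set X → ℝ)
    (hf01 : ∀ A : Set X, IsClosed A → 0 ≤ f A ∧ f A ≤ 1)
    (hI : ∀ A B : Set X, IsClosed A → IsClosed B → B ⊆ A → f B ≤ f A)
    (hII : ∀ (A : Set X) (g : Γ), IsClosed A → f (A ∩ g • A) = 0 → 2 * f A ≤ f (A ∪ g • A))
    {Y : Set X} (hstable : ∀ Z, GammaCovers Γ Y Z → (∀ g : Γ, g • Z = Z) → f Z = 0)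
    (ξ : Ordinal) {B : Set X} (hB : GammaCovers Γ Y B) (hsmall : IsRankSmall Γ Y ξ B) :
    f B = 0 := by
  induction ξ using WellFoundedLT.induction generalizing B with | _ ξ IH =>
  refine le_antisymm ?_ (hf01 B hB.1).1
  rcases hsmall.subset_stable_or_exists_succ_lt with ⟨S, hS, hSst, hBS⟩ | ⟨ξ', hξ', hsmall'⟩
  · exact (hI S B hS.1 hB.1 hBS).trans (hstable S hS hSst).le
  refine nonpos_of_forall_exists_null_inter_smul f (fun A hA => (hf01 A hA).2) hII hB.1
    fun U hU => ?_
  obtain ⟨g, hg⟩ := (hsmall'.of_gammaCovers hU).exists_inter_smul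
  have hUY := hB.trans hU
  exact ⟨g, IH ξ' hξ' (hUY.mono (hUY.1.inter (hUY.1.smul g)) inter_subset_left) hg⟩

theorem gammaCovers_stable_of_pos_general {Γ X : Type*} [Group Γ] [MulAction Γ X]
    [TopologicalSpace X] [TopologicalSpace.NoetherianSpace X] [ContinuousConstSMul Γ X]
    (f : Set X → ℝ)
    (hf01 : ∀ Y : Set X, IsClosed Y → 0 ≤ f Y ∧ f Y ≤ 1)
    (hI : ∀ Y Z : Set X, IsClosed Y → IsClosed Z → Z ⊆ Y → f Z ≤ f Y)
    (hII : ∀ (Y : Set X) (g : Γ), IsClosed Y → f (Y ∩ g • Y) = 0 →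
      2 * f Y ≤ f (Y ∪ g • Y))
    (Y W : Set X) (hcov : GammaCovers Γ Y W) (hW : 0 < f W) :
    ∃ Z : Set X, GammaCovers Γ Y Z ∧ (∀ g : Γ, g • Z = Z) ∧ 0 < f Z := by
  by_contra! hnone
  have hstable : ∀ Z, GammaCovers Γ Y Z → (∀ g : Γ, g • Z = Z) → f Z = 0 :=
    fun Z hZ hZst => le_antisymm (hnone Z hZ hZst) (hf01 Z hZ.1).1
  have hWsmall : IsRankSmall Γ Y (Order.succ (orbitRank Γ W)) W :=
    ⟨∅, {W}, .empty, fun _ => smul_set_empty, finite_singleton W,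
      by rintro _ rfl; exact ⟨hcov, Order.lt_succ _⟩, by simp⟩
  exact hW.ne' (eq_zero_of_isRankSmall f hf01 hI hII hstable _ hcov hWsmall)

/-- Let `X` be a Noetherian topological space and `Γ` a group acting on `X` by
homeomorphisms.  Let `f` be a `[0,1]`-valued function on closed subsets of `X` which is
monotone (I) and satisfies the doubling condition (II).  If a closed `Y ⊆ X` `Γ`-covers
some closed `W` with `f W > 0`, then `Y` `Γ`-covers some closed `Γ`-stable `Z` with
`f Z > 0`. -/
theorem gammaCovers_stable_of_pos {Γ X : Type*} [Group Γ] [MulAction Γ X]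
    [TopologicalSpace X] [TopologicalSpace.NoetherianSpace X] [ContinuousConstSMul Γ X]
    (f : Set X → ℝ)
    (hf01 : ∀ Y : Set X, IsClosed Y → 0 ≤ f Y ∧ f Y ≤ 1)
    (hI : ∀ Y Z : Set X, IsClosed Y → IsClosed Z → Z ⊆ Y → f Z ≤ f Y)
    (hII : ∀ (Y : Set X) (g : Γ), IsClosed Y → f (Y ∩ g • Y) = 0 →
      2 * f Y ≤ f (Y ∪ g • Y))
    (Y W : Set X) (hY : IsClosed Y) (hcov : GammaCovers Γ Y W) (hW : 0 < f W) :
    ∃ Z : Set X, GammaCovers Γ Y Z ∧ (∀ g : Γ, g • Z = Z) ∧ 0 < f Z :=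
  gammaCovers_stable_of_pos_general f hf01 hI hII Y W hcov hW
end

section
/- Let A be an integral domain that is finitely generated as a ℤ-algebra, with fraction field K. Let B be a finitely generated A-algebra and I ⊆ B an ideal such that (B/I) ⊗_A K = 0. Then there exists a maximal ideal m of A such that there is no A-algebra homomorphism B/I → A/m. (Equivalently: if a closed subset X of an affine A-scheme of finite type does not meet the generic fiber, then X(A/m) is empty for some maximal ideal m of A.) -/
/-!
Since `(B ⧸ I) ⊗_A K` is the localization of `B ⧸ I` at the nonzero elements of `A`, its
vanishing means that some `c ≠ 0` in `A` kills `B ⧸ I`. Being of finite type over the Jacobson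
ring `ℤ`, the domain `A` is Jacobson, so its Jacobson radical is `0` and some maximal ideal `m`
misses `c`. An `A`-algebra map `B ⧸ I → A ⧸ m` would send `c` both to `0` and to a unit.
-/

open TensorProduct

theorem Int.jacobson_bot : (⊥ : Ideal ℤ).jacobson = ⊥ := by
  refine le_antisymm (fun x hx ↦ ?_) Ideal.le_jacobson
  have hunit : IsUnit (x * x + 1) := Ideal.mem_jacobson_bot.mp hx x
  rw [Int.isUnit_iff] at hunit
  rw [Ideal.mem_bot]
  rcases hunit with h | h <;> nlinarith [mul_self_nonneg x]

instance Int.isJacobsonRing : IsJacobsonRing ℤ := by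
  refine isJacobsonRing_iff_prime_eq.mpr fun P hP ↦ ?_
  rcases eq_or_ne P ⊥ with rfl | hP₀
  · exact Int.jacobson_bot
  · have : P.IsMaximal := IsPrime.to_maximal_ideal hP₀
    exact Ideal.jacobson_eq_self_of_isMaximal

theorem IsJacobsonRing.exists_isMaximal_notMem {R : Type*} [CommRing R] [IsJacobsonRing R]
    [IsReduced R] {c : R} (hc : c ≠ 0) : ∃ m : Ideal R, m.IsMaximal ∧ c ∉ m := by
  have hbot : (⊥ : Ideal R).jacobson = ⊥ := by
    rw [← Ideal.radical_eq_jacobson]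
    exact nilradical_eq_zero R
  have hc' : c ∉ (⊥ : Ideal R).jacobson := by rwa [hbot, Ideal.mem_bot]
  simp only [Ideal.jacobson, Ideal.mem_sInf, not_forall] at hc'
  obtain ⟨m, ⟨-, hm⟩, hcm⟩ := hc'
  exact ⟨m, hm, hcm⟩

theorem exists_smul_eq_zero_of_subsingleton_tensorProduct {R M A : Type*} [CommRing R]
    [AddCommGroup M] [Module R M] [CommRing A] [Algebra R A] (S : Submonoid R)
    [IsLocalization S A] (h : Subsingleton (M ⊗[R] A)) (x : M) : ∃ r ∈ S, r • x = 0 := by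
  have : Subsingleton (A ⊗[R] M) := (TensorProduct.comm R A M).toEquiv.subsingleton_congr.mpr h
  exact (IsLocalizedModule.subsingleton_iff S (TensorProduct.mk R A M 1)).mp this x

theorem AlgHom.isEmpty_to_quotient_of_algebraMap_eq_zero {R S : Type*} [CommRing R] [CommRing S]
    [Algebra R S] {m : Ideal R} {c : R} (hc : algebraMap R S c = 0) (hcm : c ∉ m) :
    IsEmpty (S →ₐ[R] R ⧸ m) := by
  refine ⟨fun φ ↦ hcm ?_⟩
  rw [← Ideal.Quotient.eq_zero_iff_mem, ← Ideal.Quotient.algebraMap_eq, ← φ.commutes, hc,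
    map_zero]

theorem exists_maximal_ideal_no_point_general (A : Type*) [CommRing A] [IsDomain A]
    (hA : Algebra.FiniteType ℤ A)
    (K : Type*) [Field K] [Algebra A K] [IsFractionRing A K]
    (B : Type*) [CommRing B] [Algebra A B]
    (I : Ideal B) (h : Subsingleton (TensorProduct A (B ⧸ I) K)) :
    ∃ m : Ideal A, m.IsMaximal ∧ IsEmpty ((B ⧸ I) →ₐ[A] A ⧸ m) := by
  obtain ⟨c, hc, hc1⟩ :=
    exists_smul_eq_zero_of_subsingleton_tensorProduct (nonZeroDivisors A) h (1 : B ⧸ I)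
  have : IsJacobsonRing A := isJacobsonRing_of_finiteType (A := ℤ)
  obtain ⟨m, hm, hcm⟩ := IsJacobsonRing.exists_isMaximal_notMem (nonZeroDivisors.ne_zero hc)
  refine ⟨m, hm, AlgHom.isEmpty_to_quotient_of_algebraMap_eq_zero ?_ hcm⟩
  rwa [Algebra.algebraMap_eq_smul_one]

/-- Let `A` be an integral domain finitely generated as a `ℤ`-algebra with fraction
field `K`, let `B` be a finitely generated `A`-algebra, and let `I ⊆ B` be an ideal with
`(B/I) ⊗_A K = 0`.  Then there is a maximal ideal `m` of `A` admitting no `A`-algebra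
homomorphism `B/I → A/m`. -/
theorem exists_maximal_ideal_no_point (A : Type*) [CommRing A] [IsDomain A]
    (hA : Algebra.FiniteType ℤ A)
    (K : Type*) [Field K] [Algebra A K] [IsFractionRing A K]
    (B : Type*) [CommRing B] [Algebra A B] (hB : Algebra.FiniteType A B)
    (I : Ideal B) (h : Subsingleton (TensorProduct A (B ⧸ I) K)) :
    ∃ m : Ideal A, m.IsMaximal ∧ IsEmpty ((B ⧸ I) →ₐ[A] A ⧸ m) :=
  exists_maximal_ideal_no_point_general A hA K B I h
end

section
/- Let H be a topological group with only finitely many connected components, and let Γ ≤ H be a dense subgroup acting on H by left translation. Then a nonempty closed subset Y ⊆ H is Γ-finite (has finite orbit under left translation by Γ) if and only if Y is a union of connected components of H. -/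
/-!
If `Y` is a union of components, so is every translate `g • Y`, and there are only finitely
many unions of components. Conversely, if the orbit of `Y` is finite, its stabilizer in `Γ` has
finite index in `Γ`; since `Γ` is dense, the closure `T` of that stabilizer has finite index in
`H`, so `T` is a clopen subgroup. As `Y` is closed, `T` still maps `Y` into itself, and the
clopen right cosets `T * y` then contain the components of the points `y ∈ Y`.
-/

open scoped Pointwise

def IsUnionOfConnectedComponents {X : Type*} [TopologicalSpace X] (A : Set X) : Prop :=
  ∀ x ∈ A, connectedComponent x ⊆ A

theorem IsUnionOfConnectedComponents.preimage_image_mk {X : Type*} [TopologicalSpace X]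
    {A : Set X} (hA : IsUnionOfConnectedComponents A) :
    ConnectedComponents.mk ⁻¹' (ConnectedComponents.mk '' A) = A := by
  rw [connectedComponents_preimage_image]
  exact subset_antisymm (Set.iUnion₂_subset hA) fun x hx =>
    Set.mem_biUnion hx mem_connectedComponent

theorem finite_setOf_isUnionOfConnectedComponents {X : Type*} [TopologicalSpace X]
    [Finite (ConnectedComponents X)] :
    {A : Set X | IsUnionOfConnectedComponents A}.Finite := by
  refine Set.Finite.of_finite_image (f := Set.image ConnectedComponents.mk) (Set.toFinite _) ?_
  intro A hA B hB hAB
  rw [← hA.preimage_image_mk, ← hB.preimage_image_mk, hAB]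

theorem MulAction.finiteIndex_stabilizer_of_finite_orbit {G X : Type*} [Group G] [MulAction G X]
    {x : X} (h : (orbit G x).Finite) : (stabilizer G x).FiniteIndex := by
  have := h.to_subtype
  have := Finite.of_equiv _ (orbitEquivQuotientStabilizer G x)
  exact Subgroup.finiteIndex_of_finite_quotient

theorem isClosed_setOf_smul_subset {M X : Type*} [TopologicalSpace M] [TopologicalSpace X]
    [SMul M X] [ContinuousSMul M X] {Y : Set X} (hY : IsClosed Y) :
    IsClosed {m : M | m • Y ⊆ Y} := by
  have : {m : M | m • Y ⊆ Y} = ⋂ y ∈ Y, (· • y) ⁻¹' Y := by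
    ext m
    simp [Set.smul_set_subset_iff]
  rw [this]
  exact isClosed_biInter fun y _ => hY.preimage (continuous_id.smul continuous_const)

section TopologicalGroup

variable {G : Type*} [Group G] [TopologicalSpace G] [IsTopologicalGroup G]

theorem IsUnionOfConnectedComponents.smul {Y : Set G} (hY : IsUnionOfConnectedComponents Y)
    (g : G) : IsUnionOfConnectedComponents (g • Y) := by
  rintro _ ⟨y, hy, rfl⟩
  change connectedComponent (g * y) ⊆ g • Y
  rw [← smul_connectedComponent]
  exact Set.smul_set_mono (hY y hy)

theorem isUnionOfConnectedComponents_of_smul_subset {T : Subgroup G} (hT : IsOpen (T : Set G))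
    {Y : Set G} (hY : ∀ t ∈ T, t • Y ⊆ Y) : IsUnionOfConnectedComponents Y := by
  intro y hy z hz
  have hcoset : IsClopen ((· * y⁻¹) ⁻¹' (T : Set G)) :=
    ⟨(T.isClosed_of_isOpen hT).preimage (continuous_mul_const _),
      hT.preimage (continuous_mul_const _)⟩
  have hzT : z * y⁻¹ ∈ T := hcoset.connectedComponent_subset (by simp) hz
  simpa using hY _ hzT (Set.smul_mem_smul_set hy)

theorem Subgroup.finiteIndex_topologicalClosure_map_subtype {Γ : Subgroup G}
    (hΓ : Dense (Γ : Set G)) (K : Subgroup Γ) [K.FiniteIndex] :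
    (K.map Γ.subtype).topologicalClosure.FiniteIndex := by
  set T := (K.map Γ.subtype).topologicalClosure
  have : IsClosed (T : Set G) := Subgroup.isClosed_topologicalClosure _
  let f : Γ ⧸ K → G ⧸ T := Quotient.map' Subtype.val fun a b h => by
    rw [QuotientGroup.leftRel_apply] at h ⊢
    exact Subgroup.le_topologicalClosure _ ⟨_, h, rfl⟩
  have hdense : Dense (Set.range f) :=
    (QuotientGroup.mk_surjective.denseRange.comp hΓ.denseRange_val
      QuotientGroup.continuous_mk).mono (Set.range_comp_subset_range QuotientGroup.mk f)
  -- `G ⧸ T` is T1 because `T` is closed, so the finite dense set `Set.range f` is everything.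
  have hf : Function.Surjective f := by
    rw [← Set.range_eq_univ, ← hdense.closure_eq, (Set.finite_range f).isClosed.closure_eq]
  have := Finite.of_surjective f hf
  exact Subgroup.finiteIndex_of_finite_quotient

end TopologicalGroup

theorem gammaFinite_iff_union_of_components_general (H : Type*) [Group H] [TopologicalSpace H]
    [IsTopologicalGroup H] (hcomp : Finite (ConnectedComponents H))
    (Γ : Subgroup H) (hdense : Dense (Γ : Set H))
    (Y : Set H) (hcl : IsClosed Y) :
    (Set.range fun g : Γ => (g : H) • Y).Finite ↔
      ∀ y ∈ Y, connectedComponent y ⊆ Y := by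
  constructor
  · intro hfin
    have := MulAction.finiteIndex_stabilizer_of_finite_orbit (G := Γ) (x := Y) hfin
    set T := ((MulAction.stabilizer Γ Y).map Γ.subtype).topologicalClosure
    have := Subgroup.finiteIndex_topologicalClosure_map_subtype hdense (MulAction.stabilizer Γ Y)
    have hTopen : IsOpen (T : Set H) :=
      T.isOpen_of_isClosed_of_finiteIndex (Subgroup.isClosed_topologicalClosure _)
    have hTY : (T : Set H) ⊆ {g | g • Y ⊆ Y} := by
      refine closure_minimal ?_ (isClosed_setOf_smul_subset hcl)
      rintro _ ⟨g, hg, rfl⟩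
      exact (MulAction.mem_stabilizer_iff.mp hg).subset
    exact isUnionOfConnectedComponents_of_smul_subset hTopen hTY
  · intro hY
    refine finite_setOf_isUnionOfConnectedComponents.subset ?_
    rintro _ ⟨g, rfl⟩
    exact IsUnionOfConnectedComponents.smul hY g

/-- Let `H` be a topological group with finitely many connected components and let
`Γ ≤ H` be a dense subgroup, acting on `H` by left translation.  A nonempty closed
subset `Y ⊆ H` has finite `Γ`-orbit if and only if it is a union of connected
components of `H`. -/
theorem gammaFinite_iff_union_of_components (H : Type*) [Group H] [TopologicalSpace H]
    [IsTopologicalGroup H] (hcomp : Finite (ConnectedComponents H))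
    (Γ : Subgroup H) (hdense : Dense (Γ : Set H))
    (Y : Set H) (hne : Y.Nonempty) (hcl : IsClosed Y) :
    (Set.range fun g : Γ => (g : H) • Y).Finite ↔
      ∀ y ∈ Y, connectedComponent y ⊆ Y :=
  gammaFinite_iff_union_of_components_general H hcomp Γ hdense Y hcl
end

section
/- Assume that every finitely generated residually finite group satisfying a probabilistic identity satisfies an identity. Then every finitely generated residually finite group Γ either satisfies an identity or is randomly free. In particular, under this assumption: (i) if Γ does not satisfy an identity then its profinite completion contains a nonabelian free subgroup; (ii) if the profinite completion of Γ contains a nonabelian free subgroup, then for every n ≥ 1 almost all n-tuples in the profinite completion (with respect to Haar measure) freely generate a free subgroup of rank n. -/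
universe u

/-- A group is residually finite if every nontrivial element survives in some finite
quotient. -/
def IsResiduallyFinite (Γ : Type u) [Group Γ] : Prop :=
  ∀ g : Γ, g ≠ 1 → ∃ N : Subgroup Γ, N.Normal ∧ N.FiniteIndex ∧ g ∉ N

/-- The probability that a word `w ∈ F_n` evaluates to `1` at an independent uniformly
random `n`-tuple of elements of `Q`. -/
noncomputable def wordProb (Q : Type*) [Group Q] {n : ℕ} (w : FreeGroup (Fin n)) : ℝ :=
  (Nat.card {h : Fin n → Q // FreeGroup.lift h w = 1} : ℝ) / (Nat.card Q : ℝ) ^ n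

/-- A nontrivial word `w ∈ F_n` is a probabilistic identity of `Γ` if there is `ε > 0`
such that in every finite quotient of `Γ` the probability that `w = 1` is at least `ε`. -/
def IsProbabilisticIdentity (Γ : Type u) [Group Γ] {n : ℕ} (w : FreeGroup (Fin n)) : Prop :=
  w ≠ 1 ∧ ∃ ε : ℝ, 0 < ε ∧
    ∀ (N : Subgroup Γ) (_ : N.Normal), N.FiniteIndex → ε ≤ wordProb (Γ ⧸ N) w

/-- `Γ` satisfies a (nontrivial) identity. -/
def SatisfiesIdentity (Γ : Type u) [Group Γ] : Prop :=
  ∃ (n : ℕ) (w : FreeGroup (Fin n)), w ≠ 1 ∧ ∀ g : Fin n → Γ, FreeGroup.lift g w = 1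

variable (Γ : Type u) [Group Γ]

/-- The index set for the profinite completion: normal subgroups of finite index. -/
def FinIndexNormal := {N : Subgroup Γ // N.Normal ∧ N.FiniteIndex}

instance (N : FinIndexNormal Γ) : N.1.Normal := N.2.1
instance (N : FinIndexNormal Γ) : N.1.FiniteIndex := N.2.2
instance (N : FinIndexNormal Γ) : TopologicalSpace (Γ ⧸ N.1) := ⊥
instance (N : FinIndexNormal Γ) : DiscreteTopology (Γ ⧸ N.1) := ⟨rfl⟩
instance (N : FinIndexNormal Γ) : IsTopologicalGroup (Γ ⧸ N.1) where
  continuous_mul := continuous_of_discreteTopology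
  continuous_inv := continuous_of_discreteTopology

/-- The ambient product of all finite quotients of `Γ`. -/
abbrev ProfCompAmbient := ∀ N : FinIndexNormal Γ, Γ ⧸ N.1

/-- The canonical (diagonal) homomorphism of `Γ` into the product of its finite quotients. -/
def toProfComp : Γ →* ProfCompAmbient Γ where
  toFun g := fun _ => QuotientGroup.mk g
  map_one' := rfl
  map_mul' _ _ := rfl

/-- The profinite completion of `Γ`. -/
def ProfiniteCompletion : Subgroup (ProfCompAmbient Γ) :=
  (toProfComp Γ).range.topologicalClosure

/-- The profinite completion of `Γ`, as a (compact) topological group. -/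
abbrev ProfiniteCompletionGrp := ↥(ProfiniteCompletion Γ)

instance : CompactSpace (ProfiniteCompletionGrp Γ) :=
  isCompact_iff_compactSpace.mp
    ((Subgroup.isClosed_topologicalClosure ((toProfComp Γ).range)).isCompact)

noncomputable instance : MeasurableSpace (ProfiniteCompletionGrp Γ) := borel _
instance : BorelSpace (ProfiniteCompletionGrp Γ) := ⟨rfl⟩

/-- `Γ` is randomly free: for every `n ≥ 1`, the set of `n`-tuples of its profinite
completion freely generating a free subgroup of rank `n` has Haar measure `1`. -/
def RandomlyFree : Prop :=
  ∀ (μ : MeasureTheory.Measure (ProfiniteCompletionGrp Γ)),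
    μ.IsHaarMeasure → MeasureTheory.IsProbabilityMeasure μ →
    ∀ n : ℕ, 1 ≤ n →
      MeasureTheory.Measure.pi (fun _ : Fin n => μ)
        {g : Fin n → ProfiniteCompletionGrp Γ |
          Function.Injective ⇑(FreeGroup.lift g : FreeGroup (Fin n) →* ProfiniteCompletionGrp Γ)}
        = 1

/-!
If `Γ` satisfies no identity, the hypothesis says that no nontrivial word `w` is a probabilistic
identity of `Γ`: `w` holds with arbitrarily small probability in suitable finite quotients `Γ ⧸ N`.
Since the Haar measure of a fibre of the profinite completion over `Γ ⧸ N` is `1 / |Γ ⧸ N|`, the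
tuples of the completion satisfying `w` have Haar measure at most that probability, hence measure
zero; the tuples that do not generate freely form the countable union of these null sets.
Conversely, an identity of `Γ` passes by density and continuity to the profinite completion, and
no nontrivial word is an identity of `F₂`, which contains free subgroups of infinite rank by
ping-pong; so the completion of such a `Γ` contains no free subgroup of rank two.
-/

namespace FreeGroup

variable {α : Type*}

theorem apply_lift {G H : Type*} [Group G] [Group H] (f : G →* H) (g : α → G)
    (w : FreeGroup α) : f (lift g w) = lift (f ∘ g) w := by
  rw [← MonoidHom.comp_apply]
  congr 1
  ext
  simp

variable [DecidableEq α]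

theorem toWord_mk_singleton_mul {x : α} {s : Bool} {u : FreeGroup α}
    (hu : ∀ t, u.toWord ≠ (x, !s) :: t) :
    (mk [(x, s)] * u).toWord = (x, s) :: u.toWord := by
  have hred : IsReduced ((x, s) :: u.toWord) := by
    rcases hword : u.toWord with _ | ⟨⟨y, b⟩, t⟩
    · exact .singleton
    refine isReduced_cons_cons.mpr ⟨fun hxy => ?_, hword ▸ isReduced_toWord⟩
    subst hxy
    by_contra hsb
    exact hu t (by rw [hword]; cases s <;> cases b <;> simp_all)
  rw [toWord_mul, toWord_mk, IsReduced.singleton.reduce_eq]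
  exact hred.reduce_eq

theorem toWord_of_pow_mul {x : α} (k : ℕ) {u : FreeGroup α}
    (hu : ∀ t, u.toWord ≠ (x, false) :: t) :
    (of x ^ k * u).toWord = List.replicate k (x, true) ++ u.toWord := by
  induction k with
  | zero => simp
  | succ k ih =>
    rw [pow_succ', mul_assoc]
    change (mk [(x, true)] * (of x ^ k * u)).toWord = _
    rw [toWord_mk_singleton_mul, ih, List.replicate_succ, List.cons_append]
    intro t ht
    rw [ih] at ht
    cases k with
    | zero => exact hu t ht
    | succ k => simp [List.replicate_succ] at ht

end FreeGroup

theorem List.eq_and_eq_of_replicate_append_cons_eq {β : Type*} {a b b' : β} (hb : b ≠ a)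
    (hb' : b' ≠ a) {m n : ℕ} {l l' : List β}
    (h : List.replicate m a ++ b :: l = List.replicate n a ++ b' :: l') : m = n ∧ b = b' := by
  induction m generalizing n with
  | zero => cases n <;> simp_all [List.replicate_succ, eq_comm]
  | succ m ih =>
    cases n with
    | zero => simp_all [List.replicate_succ]
    | succ n => simpa using ih (by simpa [List.replicate_succ] using h)

namespace FreeGroup

/-- Reduced words beginning with `a ^ (i + 1) * b ^ (±1)`, where `a = of 0`, `b = of 1` and the
sign is given by `s`. -/
def pingPongSet (i : ℕ) (s : Bool) : Set (FreeGroup (Fin 2)) :=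
  {w | ∃ t, w.toWord = List.replicate (i + 1) (0, true) ++ (1, s) :: t}

theorem disjoint_pingPongSet {i j : ℕ} {s r : Bool} (h : (i, s) ≠ (j, r)) :
    Disjoint (pingPongSet i s) (pingPongSet j r) := by
  refine Set.disjoint_left.mpr fun w ⟨t, ht⟩ ⟨t', ht'⟩ => h ?_
  obtain ⟨hij, hsr⟩ := List.eq_and_eq_of_replicate_append_cons_eq (by simp) (by simp)
    (ht.symm.trans ht')
  simp_all

theorem of_zero_pow_mul_mem_pingPongSet (i : ℕ) {s : Bool} {v : FreeGroup (Fin 2)}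
    {t : List (Fin 2 × Bool)} (hv : v.toWord = (1, s) :: t) :
    of 0 ^ (i + 1) * v ∈ pingPongSet i s :=
  ⟨t, by rw [toWord_of_pow_mul _ (by simp [hv]), hv]⟩

theorem conj_mul_mem_pingPongSet (i : ℕ) (s : Bool) {w : FreeGroup (Fin 2)}
    (hw : w ∉ pingPongSet i (!s)) :
    of 0 ^ (i + 1) * mk [(1, s)] * (of 0 ^ (i + 1))⁻¹ * w ∈ pingPongSet i s := by
  set v := (of 0 ^ (i + 1))⁻¹ * w
  have hv : ∀ t, v.toWord ≠ (1, !s) :: t := fun t ht =>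
    hw (by simpa [v] using of_zero_pow_mul_mem_pingPongSet i ht)
  have hrw : of 0 ^ (i + 1) * mk [(1, s)] * (of 0 ^ (i + 1))⁻¹ * w
      = of 0 ^ (i + 1) * (mk [(1, s)] * v) := by simp only [v, mul_assoc]
  rw [hrw]
  exact of_zero_pow_mul_mem_pingPongSet i (toWord_mk_singleton_mul hv)

def conjGen (i : ℕ) : FreeGroup (Fin 2) := of 0 ^ (i + 1) * of 1 * (of 0 ^ (i + 1))⁻¹

theorem injective_lift_conjGen : Function.Injective (lift conjGen) := by
  refine injective_lift_of_ping_pong conjGen (fun i => pingPongSet i true)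
    (fun i => pingPongSet i false) (fun i => ⟨_, of_zero_pow_mul_mem_pingPongSet i (toWord_of 1)⟩)
    (fun i j hij => disjoint_pingPongSet (by simpa using hij))
    (fun i j hij => disjoint_pingPongSet (by simpa using hij))
    (fun i j => disjoint_pingPongSet (by simp)) ?_ ?_
  · rintro i _ ⟨w, hw, rfl⟩
    exact conj_mul_mem_pingPongSet i true hw
  · rintro i _ ⟨w, hw, rfl⟩
    have hinv : (conjGen i)⁻¹ = of 0 ^ (i + 1) * mk [(1, false)] * (of 0 ^ (i + 1))⁻¹ := by
      have hb : mk [((1 : Fin 2), false)] = (of 1)⁻¹ := by rw [of, inv_mk]; rfl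
      rw [hb, conjGen]
      group
    simpa [hinv] using conj_mul_mem_pingPongSet i false hw

end FreeGroup

theorem SatisfiesIdentity.of_injective {G H : Type*} [Group G] [Group H] (f : G →* H)
    (hf : Function.Injective f) (hH : SatisfiesIdentity H) : SatisfiesIdentity G := by
  obtain ⟨n, w, hw, hlaw⟩ := hH
  exact ⟨n, w, hw, fun g => hf (by rw [FreeGroup.apply_lift, hlaw, map_one])⟩

theorem FreeGroup.not_satisfiesIdentity (α : Type*) [Infinite α] :
    ¬ SatisfiesIdentity (FreeGroup α) := by
  rintro ⟨n, w, hw, hlaw⟩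
  set e : Fin n → α := Infinite.natEmbedding α ∘ Fin.val
  have he : Function.Injective e := (Infinite.natEmbedding α).injective.comp Fin.val_injective
  refine hw (map_injective he ?_)
  rw [map_eq_lift, hlaw]
  exact (_root_.map_one _).symm

theorem FreeGroup.not_satisfiesIdentity_fin_two : ¬ SatisfiesIdentity (FreeGroup (Fin 2)) :=
  fun h => not_satisfiesIdentity ℕ (h.of_injective _ injective_lift_conjGen)

theorem FreeGroup.continuous_lift_apply {α H : Type*} [Group H] [TopologicalSpace H]
    [IsTopologicalGroup H] (w : FreeGroup α) : Continuous fun g : α → H => lift g w := by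
  induction w using FreeGroup.induction_on with
  | C1 => simpa using continuous_const
  | of x => simpa using continuous_apply x
  | inv_of x ih =>
    simp only [_root_.map_inv]
    exact ih.inv
  | mul v v' ih ih' =>
    simp only [_root_.map_mul]
    exact ih.mul ih'

section FiniteQuotient

open MeasureTheory

variable {G Q : Type*} [Group G] [MeasurableSpace G] [MeasurableMul G] [Group Q] [Finite Q]
  {μ : Measure G} [μ.IsMulLeftInvariant] [IsProbabilityMeasure μ] {π : G →* Q}

/-- Left translation permutes the fibres of `π`, so they all have the same measure. -/
theorem measure_preimage_singleton_eq_inv_card (hπ : Function.Surjective π)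
    (hfib : ∀ q, MeasurableSet (π ⁻¹' {q})) (q : Q) :
    μ (π ⁻¹' {q}) = (Nat.card Q : ENNReal)⁻¹ := by
  classical
  have : Fintype Q := Fintype.ofFinite Q
  have htrans : ∀ q, μ (π ⁻¹' {q}) = μ (π ⁻¹' {1}) := fun q => by
    obtain ⟨x, rfl⟩ := hπ q
    have hpre : (x * ·) ⁻¹' (π ⁻¹' {π x}) = π ⁻¹' {1} := by ext; simp
    rw [← hpre, measure_preimage_mul]
  have hsum : (Nat.card Q : ENNReal) * μ (π ⁻¹' {1}) = 1 := by
    rw [← measure_univ (μ := μ), ← Set.preimage_univ (f := π), ← Finset.coe_univ,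
      ← sum_measure_preimage_singleton _ fun q _ => hfib q]
    simp [htrans, Nat.card_eq_fintype_card]
  rw [htrans]
  exact ENNReal.eq_inv_of_mul_eq_one_left (by rwa [mul_comm])

theorem measure_pi_lift_eq_one_le_wordProb (hπ : Function.Surjective π)
    (hfib : ∀ q, MeasurableSet (π ⁻¹' {q})) {n : ℕ} (w : FreeGroup (Fin n)) :
    Measure.pi (fun _ : Fin n => μ) {g | FreeGroup.lift g w = 1}
      ≤ ENNReal.ofReal (wordProb Q w) := by
  classical
  have : Fintype Q := Fintype.ofFinite Q
  set Z : Finset (Fin n → Q) := Finset.univ.filter fun h => FreeGroup.lift h w = 1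
  have hsub : {g : Fin n → G | FreeGroup.lift g w = 1}
      ⊆ ⋃ h ∈ Z, Set.univ.pi fun i => π ⁻¹' {h i} := fun g hg => by
    refine Set.mem_biUnion (x := π ∘ g) ?_ fun i _ => rfl
    simp [Z, ← FreeGroup.apply_lift, hg.out]
  calc Measure.pi (fun _ : Fin n => μ) {g | FreeGroup.lift g w = 1}
      ≤ ∑ h ∈ Z, Measure.pi (fun _ : Fin n => μ) (Set.univ.pi fun i => π ⁻¹' {h i}) :=
        (measure_mono hsub).trans (measure_biUnion_finset_le _ _)
    _ = Z.card * ((Nat.card Q : ENNReal)⁻¹) ^ n := by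
        simp [Measure.pi_pi, measure_preimage_singleton_eq_inv_card hπ hfib]
    _ = ENNReal.ofReal (wordProb Q w) := by
        have hQ : 0 < Nat.card Q := Nat.card_pos
        have hcard : Nat.card {h : Fin n → Q // FreeGroup.lift h w = 1} = Z.card := by
          rw [Nat.card_eq_fintype_card, Fintype.card_subtype]
        rw [wordProb, ENNReal.ofReal_div_of_pos (by positivity), hcard, ENNReal.ofReal_natCast,
          ENNReal.ofReal_pow (by positivity), ENNReal.ofReal_natCast, ENNReal.div_eq_inv_mul,
          ENNReal.inv_pow, mul_comm]

end FiniteQuotient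

section ProfiniteCompletion

open MeasureTheory

def toProfiniteCompletion : Γ →* ProfiniteCompletionGrp Γ :=
  (toProfComp Γ).codRestrict _ fun g => Subgroup.le_topologicalClosure _ ⟨g, rfl⟩

theorem denseRange_toProfiniteCompletion : DenseRange (toProfiniteCompletion Γ) :=
  Topology.IsInducing.subtypeVal.dense_iff.mpr fun x => by
    rw [← Set.range_comp]
    exact x.2

def projQuotient (N : FinIndexNormal Γ) : ProfiniteCompletionGrp Γ →* Γ ⧸ N.1 :=
  (Pi.evalMonoidHom _ N).comp (ProfiniteCompletion Γ).subtype

variable {Γ}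

theorem continuous_projQuotient (N : FinIndexNormal Γ) : Continuous (projQuotient Γ N) :=
  (continuous_apply N).comp continuous_subtype_val

theorem surjective_projQuotient (N : FinIndexNormal Γ) :
    Function.Surjective (projQuotient Γ N) := fun q => by
  obtain ⟨g, rfl⟩ := QuotientGroup.mk_surjective q
  exact ⟨toProfiniteCompletion Γ g, rfl⟩

theorem SatisfiesIdentity.profiniteCompletion (hΓ : SatisfiesIdentity Γ) :
    SatisfiesIdentity (ProfiniteCompletionGrp Γ) := by
  obtain ⟨n, w, hw, hlaw⟩ := hΓ
  refine ⟨n, w, hw, fun g => ?_⟩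
  have hdense : DenseRange (Pi.map fun _ : Fin n => toProfiniteCompletion Γ) :=
    DenseRange.piMap fun _ => denseRange_toProfiniteCompletion Γ
  refine hdense.induction_on g (isClosed_eq (FreeGroup.continuous_lift_apply w)
    continuous_const) fun γ => ?_
  change FreeGroup.lift (toProfiniteCompletion Γ ∘ γ) w = 1
  rw [← FreeGroup.apply_lift, hlaw, map_one]

theorem measurableSet_projQuotient_preimage (N : FinIndexNormal Γ) (q : Γ ⧸ N.1) :
    MeasurableSet (projQuotient Γ N ⁻¹' {q}) :=
  ((isOpen_discrete {q}).preimage (continuous_projQuotient N)).measurableSet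

theorem measure_pi_lift_eq_one_eq_zero (μ : Measure (ProfiniteCompletionGrp Γ))
    [μ.IsHaarMeasure] [IsProbabilityMeasure μ] {n : ℕ} {w : FreeGroup (Fin n)} (hw : w ≠ 1)
    (hnpi : ¬ IsProbabilisticIdentity Γ w) :
    Measure.pi (fun _ : Fin n => μ) {g | FreeGroup.lift g w = 1} = 0 := by
  refine le_antisymm (ENNReal.le_of_forall_pos_le_add fun ε hε _ => ?_) bot_le
  simp only [IsProbabilisticIdentity, not_and, not_exists, not_forall, not_le] at hnpi
  obtain ⟨N, hN, hfin, hlt⟩ := hnpi hw ε hε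
  calc Measure.pi (fun _ : Fin n => μ) {g | FreeGroup.lift g w = 1}
      ≤ ENNReal.ofReal (wordProb (Γ ⧸ N) w) :=
        measure_pi_lift_eq_one_le_wordProb (surjective_projQuotient ⟨N, hN, hfin⟩)
          (measurableSet_projQuotient_preimage ⟨N, hN, hfin⟩) w
    _ ≤ 0 + ε := by simpa using ENNReal.ofReal_le_ofReal hlt.le

/-- The tuples that do not generate freely are those satisfying some nontrivial word, a countable
union of null sets. -/
theorem randomlyFree_of_forall_not_isProbabilisticIdentity
    (h : ∀ (n : ℕ) (w : FreeGroup (Fin n)), ¬ IsProbabilisticIdentity Γ w) : RandomlyFree Γ := by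
  intro μ _ _ n _
  have hcompl : {g : Fin n → ProfiniteCompletionGrp Γ | Function.Injective (FreeGroup.lift g)}ᶜ
      ⊆ ⋃ w : {w : FreeGroup (Fin n) // w ≠ 1}, {g | FreeGroup.lift g w.1 = 1} := fun g hg => by
    obtain ⟨w, hw1, hw⟩ : ∃ w, FreeGroup.lift g w = 1 ∧ w ≠ 1 := by
      simpa [injective_iff_map_eq_one] using hg
    exact Set.mem_iUnion.mpr ⟨⟨w, hw⟩, hw1⟩
  rw [measure_congr (ae_eq_univ.mpr (measure_mono_null hcompl (measure_iUnion_null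
    fun w => measure_pi_lift_eq_one_eq_zero μ w.2 (h n w)))), measure_univ]

theorem RandomlyFree.exists_injective_lift (hΓ : RandomlyFree Γ) {n : ℕ} (hn : 1 ≤ n) :
    ∃ g : Fin n → ProfiniteCompletionGrp Γ, Function.Injective (FreeGroup.lift g) := by
  let μ := Measure.haarMeasure (⊤ : TopologicalSpace.PositiveCompacts (ProfiniteCompletionGrp Γ))
  have : IsProbabilityMeasure μ := ⟨Measure.haarMeasure_self⟩
  exact nonempty_of_measure_ne_zero (hΓ μ inferInstance this n hn ▸ one_ne_zero)

end ProfiniteCompletion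

/-- Assuming a positive answer to Problem 1 (every finitely generated residually finite
group satisfying a probabilistic identity satisfies an identity), every finitely
generated residually finite group `Γ` either satisfies an identity or is randomly free.
In particular, (i) if `Γ` satisfies no identity then its profinite completion has a
nonabelian free subgroup, and (ii) if its profinite completion has a nonabelian free
subgroup then almost all `n`-tuples freely generate a free subgroup of rank `n`. -/
theorem identity_or_randomly_free
    (hProblem1 : ∀ (Δ : Type u) [Group Δ], Group.FG Δ → IsResiduallyFinite Δ →
      (∃ (n : ℕ) (w : FreeGroup (Fin n)), IsProbabilisticIdentity Δ w) →
      SatisfiesIdentity Δ)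
    [Group.FG Γ] (hrf : IsResiduallyFinite Γ) :
    (SatisfiesIdentity Γ ∨ RandomlyFree Γ) ∧
    (¬ SatisfiesIdentity Γ →
      ∃ g : Fin 2 → ProfiniteCompletionGrp Γ,
        Function.Injective ⇑(FreeGroup.lift g : FreeGroup (Fin 2) →* ProfiniteCompletionGrp Γ)) ∧
    ((∃ g : Fin 2 → ProfiniteCompletionGrp Γ,
        Function.Injective ⇑(FreeGroup.lift g : FreeGroup (Fin 2) →* ProfiniteCompletionGrp Γ)) →
      RandomlyFree Γ) := by
  have hRF : ¬ SatisfiesIdentity Γ → RandomlyFree Γ := fun hno =>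
    randomlyFree_of_forall_not_isProbabilisticIdentity fun n w hw =>
      hno (hProblem1 Γ ‹_› hrf ⟨n, w, hw⟩)
  have hno_pair : SatisfiesIdentity Γ →
      ¬ ∃ g : Fin 2 → ProfiniteCompletionGrp Γ, Function.Injective (FreeGroup.lift g) :=
    fun hΓ ⟨_, hg⟩ =>
      FreeGroup.not_satisfiesIdentity_fin_two (hΓ.profiniteCompletion.of_injective _ hg)
  exact ⟨or_iff_not_imp_left.mpr hRF, fun hno => (hRF hno).exists_injective_lift one_le_two,
    fun hpair => hRF fun hΓ => hno_pair hΓ hpair⟩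
end

section
/- Assume the following: for every nontrivial word w ∈ F_n, every positive integer d, and every ε > 0, there exists a nontrivial word v ∈ F_m (for some m) such that every finite d-generated group G with P_G(w) ≥ ε satisfies the identity v. Let n ≥ 2 be an integer, p a prime, and X a set of n-generated finite p-groups. Then the free group F_n is residually X if and only if the groups in X do not satisfy a common nontrivial identity. -/
open Finset

namespace FreeGroup

variable {α β : Type*}

theorem apply_lift_s14 {K L F : Type*} [Group K] [Group L] [FunLike F K L] [MonoidHomClass F K L]
    (φ : F) (f : α → K) (x : FreeGroup α) : φ (lift f x) = lift (φ ∘ f) x :=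
  lift_unique ((φ : K →* L).comp (lift f)) fun _ => by simp

theorem exists_perm_eq_of_mul_mem (S : Finset (FreeGroup α)) (a : α) :
    ∃ σ : Equiv.Perm S, ∀ x : S, of a * (x : FreeGroup α) ∈ S → (σ x : FreeGroup α) = of a * x :=
  Set.MapsTo.exists_equiv_extend_of_card_eq (s := {x : S | of a * (x : FreeGroup α) ∈ S})
    (Fintype.card_coe S) (fun _ hx => hx) fun _ _ _ _ h => Subtype.ext (mul_left_cancel h)

theorem lift_mk_apply_of_isSuffix {S : Finset (FreeGroup α)} {σ : α → Equiv.Perm S}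
    (hσ : ∀ a (x : S), of a * (x : FreeGroup α) ∈ S → (σ a x : FreeGroup α) = of a * x)
    (L : List (α × Bool)) (x : S) (hL : ∀ L', L' <:+ L → mk L' * (x : FreeGroup α) ∈ S) :
    (lift σ (mk L) x : FreeGroup α) = mk L * x := by
  induction L with
  | nil => simp [← one_eq_mk]
  | cons l L ih =>
    have hmk : mk (l :: L) = mk [l] * mk L := by rw [mul_mk]; rfl
    have hz : mk [l] * mk L * (x : FreeGroup α) ∈ S := hmk ▸ hL _ List.suffix_rfl
    have hy := ih fun L' h => hL L' (h.trans (List.suffix_cons l L))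
    rw [hmk, _root_.map_mul, Equiv.Perm.mul_apply]
    set y := lift σ (mk L) x
    obtain ⟨a, _ | _⟩ := l
    · have hinv : mk [(a, false)] = (of a)⁻¹ := rfl
      rw [hinv] at hz ⊢
      rw [_root_.map_inv, lift_apply_of]
      suffices y = σ a ⟨_, hz⟩ by rw [this]; simp
      rw [Subtype.ext_iff, hσ a _ (by simp [mul_assoc, ← hy]), hy]
      group
    · have hof : mk [(a, true)] = of a := rfl
      rw [hof] at hz ⊢
      rw [lift_apply_of, hσ a y (by rwa [hy, ← mul_assoc]), hy, mul_assoc]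

theorem exists_perm_lift_ne_one {v : FreeGroup α} (hv : v ≠ 1) :
    ∃ (k : ℕ) (σ : α → Equiv.Perm (Fin (k + 2))), lift σ v ≠ 1 := by
  classical
  let S : Finset (FreeGroup α) := v.toWord.tails.toFinset.image mk
  have hS : ∀ L, L <:+ v.toWord → mk L ∈ S := fun L hL =>
    Finset.mem_image_of_mem mk (List.mem_toFinset.mpr ((List.mem_tails _ _).mpr hL))
  have h1 : (1 : FreeGroup α) ∈ S := hS [] List.nil_suffix
  have hvS : v ∈ S := by simpa only [mk_toWord] using hS v.toWord List.suffix_rfl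
  choose σ hσ using exists_perm_eq_of_mul_mem S
  have hσv : (lift σ v ⟨1, h1⟩ : FreeGroup α) = v := by
    have := lift_mk_apply_of_isSuffix hσ v.toWord ⟨1, h1⟩ fun L hL => by simpa using hS L hL
    rwa [mk_toWord, mul_one] at this
  obtain ⟨k, hk⟩ := Nat.exists_eq_add_of_le' (Finset.one_lt_card.mpr ⟨1, h1, v, hvS, hv.symm⟩)
  let e : Equiv.Perm S ≃* Equiv.Perm (Fin (k + 2)) :=
    (Fintype.equivFinOfCardEq (by simpa using hk)).permCongrHom
  refine ⟨k, e ∘ σ, fun h => hv ?_⟩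
  rw [← apply_lift_s14, e.map_eq_one_iff] at h
  simpa [h] using hσv.symm

theorem exists_lift_ne_one_of_closure_eq_top {K : Type*} [Group K] {q : β → K}
    (hq : Subgroup.closure (Set.range q) = ⊤) {v : FreeGroup α} {σ : α → K} (hσ : lift σ v ≠ 1) :
    ∃ u : α → FreeGroup β, lift u v ≠ 1 := by
  choose u hu using lift_surjective_iff_closure_range_eq_top.mpr hq
  refine ⟨u ∘ σ, fun h => hσ ?_⟩
  have hσ_eq : lift q ∘ u ∘ σ = σ := funext fun a => hu (σ a)
  rw [← hσ_eq, ← apply_lift_s14, h, _root_.map_one]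

theorem exists_lift_ne_one [Nontrivial β] {v : FreeGroup α} (hv : v ≠ 1) :
    ∃ u : α → FreeGroup β, lift u v ≠ 1 := by
  classical
  obtain ⟨k, σ, hσ⟩ := exists_perm_lift_ne_one hv
  obtain ⟨b₁, b₂, hb⟩ := exists_pair_ne β
  let q : β → Equiv.Perm (Fin (k + 2)) := fun b =>
    if b = b₁ then finRotate _ else if b = b₂ then Equiv.swap 0 (finRotate _ 0) else 1
  refine exists_lift_ne_one_of_closure_eq_top (q := q) ?_ hσ
  rw [eq_top_iff, ← Equiv.Perm.closure_cycle_adjacent_swap isCycle_finRotate support_finRotate 0]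
  refine Subgroup.closure_mono ?_
  rintro x (rfl | rfl)
  exacts [⟨b₁, by simp [q]⟩, ⟨b₂, by simp [q, hb.symm]⟩]

end FreeGroup

section

variable {G : Type*} [Group G] {n : ℕ}

theorem Subgroup.card_forall_mem (H : Subgroup G) :
    Nat.card {h : Fin n → G // ∀ j, h j ∈ H} = Nat.card H ^ n := by
  rw [Nat.card_congr (Equiv.subtypePiEquivPi), Nat.card_fun, Nat.card_fin]

theorem MonoidHom.card_le_pow_of_closure_range_eq_top {M : Type*} [Monoid M] [Finite M]
    {g : Fin n → G} (hg : Subgroup.closure (Set.range g) = ⊤) :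
    Nat.card (G →* M) ≤ Nat.card M ^ n := by
  rw [← Nat.card_fin n, ← Nat.card_fun]
  refine Nat.card_le_card_of_injective (fun χ => χ ∘ g) fun χ ψ h =>
    MonoidHom.eq_of_eqOn_dense hg ?_
  rintro _ ⟨j, rfl⟩
  exact congrFun h j

theorem MonoidHom.prime_mul_card_ker {p : ℕ} [hp : Fact p.Prime]
    {χ : G →* Multiplicative (ZMod p)} (hχ : χ ≠ 1) : p * Nat.card χ.ker = Nat.card G := by
  have hcard : Nat.card (Multiplicative (ZMod p)) = p := by simp
  have : Fact (Nat.card (Multiplicative (ZMod p))).Prime := ⟨by rw [hcard]; exact hp.out⟩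
  have hrange : χ.range = ⊤ := (Subgroup.eq_bot_or_eq_top_of_prime_card χ.range).resolve_left
    (mt MonoidHom.range_eq_bot_iff.mp hχ)
  rw [← χ.ker.index_mul_card, Subgroup.index_ker, hrange, Subgroup.card_top, hcard]

namespace IsPGroup

variable {p : ℕ} [hp : Fact p.Prime] [Finite G]

theorem card_quotient_of_isCoatom (hG : IsPGroup p G) {M : Subgroup G} [M.Normal]
    (hM : IsCoatom M) : Nat.card (G ⧸ M) = p := by
  have hdvd : p ∣ Nat.card (G ⧸ M) := (hG.to_quotient M).card_eq_or_dvd.resolve_left fun h =>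
    hM.1 (QuotientGroup.subgroup_eq_top_of_subsingleton M (Nat.card_eq_one_iff_unique.mp h).1)
  obtain ⟨g, hg⟩ := exists_prime_orderOf_dvd_card' p hdvd
  have hsurj := QuotientGroup.mk'_surjective M
  have hker : (⊥ : Subgroup (G ⧸ M)).comap (QuotientGroup.mk' M) = M := by
    rw [MonoidHom.comap_bot, QuotientGroup.ker_mk']
  have htop : Subgroup.zpowers g = ⊤ := by
    refine Subgroup.comap_injective hsurj
      ((hM.le_iff.mp (QuotientGroup.le_comap_mk' M _)).resolve_right fun h => ?_)
    have hg1 : g = 1 :=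
      Subgroup.zpowers_eq_bot.mp (Subgroup.comap_injective hsurj (h.trans hker.symm))
    exact hp.out.one_lt.ne (by rw [← hg, hg1, orderOf_one])
  rw [← hg, ← Nat.card_zpowers, htop, Subgroup.card_top]

theorem exists_ne_one_le_ker (hG : IsPGroup p G) {H : Subgroup G} (hH : H ≠ ⊤) :
    ∃ χ : G →* Multiplicative (ZMod p), χ ≠ 1 ∧ H ≤ χ.ker := by
  have : Finite (Subgroup G) := Finite.of_injective _ SetLike.coe_injective
  obtain ⟨M, hM, hHM⟩ := (eq_top_or_exists_le_coatom H).resolve_left hH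
  have := hG.isNilpotent
  have := Subgroup.NormalizerCondition.normal_of_coatom M
    Group.normalizerCondition_of_isNilpotent hM
  have hcard := hG.card_quotient_of_isCoatom hM
  let e : G ⧸ M ≃* Multiplicative (ZMod p) :=
    (hcard ▸ zmodCyclicMulEquiv (isCyclic_of_prime_card hcard)).symm
  have hker : (e.toMonoidHom.comp (QuotientGroup.mk' M)).ker = M := by
    rw [MonoidHom.ker_comp_of_injective _ _ e.injective, QuotientGroup.ker_mk']
  refine ⟨e.toMonoidHom.comp (QuotientGroup.mk' M), fun h => hM.1 ?_, hHM.trans hker.ge⟩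
  rw [← hker, h, MonoidHom.ker_one]

theorem card_pow_le_mul_card_generating (hG : IsPGroup p G)
    (hgen : ∃ g : Fin n → G, Subgroup.closure (Set.range g) = ⊤) :
    Nat.card G ^ n ≤ p ^ n * Nat.card {h : Fin n → G // Subgroup.closure (Set.range h) = ⊤} := by
  classical
  have := Fintype.ofFinite G
  have : Finite (G →* Multiplicative (ZMod p)) := Finite.of_injective _ DFunLike.coe_injective
  have := Fintype.ofFinite (G →* Multiplicative (ZMod p))
  let gen (h : Fin n → G) : Prop := Subgroup.closure (Set.range h) = ⊤
  let K (χ : G →* Multiplicative (ZMod p)) : Finset (Fin n → G) := {h | ∀ j, h j ∈ χ.ker}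
  let S : Finset (G →* Multiplicative (ZMod p)) := {χ | χ ≠ 1}
  have hcover : ({h | ¬ gen h} : Finset (Fin n → G)) ⊆ S.biUnion K := by
    intro h hh
    obtain ⟨χ, hχ, hle⟩ := hG.exists_ne_one_le_ker (Finset.mem_filter.mp hh).2
    exact Finset.mem_biUnion.mpr ⟨χ, by simpa [S] using hχ,
      by simpa [K] using fun j => hle (Subgroup.subset_closure (Set.mem_range_self j))⟩
  have hK : ∀ χ ∈ S, p ^ n * #(K χ) = Nat.card G ^ n := by
    intro χ hχ
    rw [← MonoidHom.prime_mul_card_ker (Finset.mem_filter.mp hχ).2, mul_pow,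
      ← χ.ker.card_forall_mem, Nat.card_eq_fintype_card, Fintype.card_subtype]
  have hS : #S + 1 ≤ p ^ n := by
    obtain ⟨g, hg⟩ := hgen
    have := MonoidHom.card_le_pow_of_closure_range_eq_top (M := Multiplicative (ZMod p)) hg
    rw [Nat.card_eq_fintype_card, Nat.card_eq_fintype_card, Fintype.card_multiplicative,
      ZMod.card] at this
    rw [show S = univ.erase 1 from Finset.filter_ne' _ _,
      Finset.card_erase_of_mem (Finset.mem_univ _), Finset.card_univ]
    have := Fintype.card_pos (α := G →* Multiplicative (ZMod p))
    omega
  have hsplit : #({h | gen h} : Finset _) + #({h | ¬ gen h} : Finset _) = Nat.card G ^ n := by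
    rw [Finset.card_filter_add_card_filter_not, Finset.card_univ, Fintype.card_fun,
      Fintype.card_fin, Nat.card_eq_fintype_card]
  have hNonGen : p ^ n * #({h | ¬ gen h} : Finset _) ≤ #S * Nat.card G ^ n := calc
    _ ≤ p ^ n * ∑ χ ∈ S, #(K χ) :=
      Nat.mul_le_mul_left _ ((Finset.card_le_card hcover).trans Finset.card_biUnion_le)
    _ = #S * Nat.card G ^ n := by
      rw [Finset.mul_sum, Finset.sum_congr rfl hK, Finset.sum_const, smul_eq_mul]
  rw [Nat.card_eq_fintype_card (α := Subtype _), Fintype.card_subtype]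
  nlinarith

theorem one_div_pow_le_wordProb (hG : IsPGroup p G)
    (hgen : ∃ g : Fin n → G, Subgroup.closure (Set.range g) = ⊤) {w : FreeGroup (Fin n)}
    (hw : ∀ h : Fin n → G, Subgroup.closure (Set.range h) = ⊤ → FreeGroup.lift h w = 1) :
    1 / (p : ℝ) ^ n ≤ wordProb G w := by
  have hmono : Nat.card {h : Fin n → G // Subgroup.closure (Set.range h) = ⊤} ≤
      Nat.card {h : Fin n → G // FreeGroup.lift h w = 1} :=
    Nat.card_mono (Set.toFinite _) fun h hh => hw h hh
  have := Nat.card_pos (α := G)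
  have := hp.out.pos
  rw [wordProb, div_le_div_iff₀ (by positivity) (by positivity), one_mul, mul_comm]
  exact_mod_cast (hG.card_pow_le_mul_card_generating hgen).trans (Nat.mul_le_mul_left _ hmono)

end IsPGroup

end

/-- Assuming a positive answer to Problem 2 (for every nontrivial `w ∈ F_n`, every `d`
and every `ε > 0` there is a nontrivial word `v` which is an identity of every finite
`d`-generated group `G` with `P_G(w) ≥ ε`), for `n ≥ 2`, a prime `p`, and a family `X`
of `n`-generated finite `p`-groups, the free group `F_n` is residually `X` if and only
if the groups in `X` do not satisfy a common nontrivial identity. -/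
theorem residually_X_iff_no_common_identity
    (hProblem2 : ∀ (n : ℕ) (w : FreeGroup (Fin n)), w ≠ 1 → ∀ d : ℕ, 0 < d →
      ∀ ε : ℝ, 0 < ε →
        ∃ (m : ℕ) (v : FreeGroup (Fin m)), v ≠ 1 ∧
          ∀ (G : Type) [Group G] [Finite G],
            (∃ g : Fin d → G, Subgroup.closure (Set.range g) = ⊤) →
            ε ≤ wordProb G w →
            ∀ h : Fin m → G, FreeGroup.lift h v = 1)
    (n : ℕ) (hn : 2 ≤ n) (p : ℕ) (hp : p.Prime)
    (ι : Type) (G : ι → Type) [∀ i, Group (G i)] [∀ i, Finite (G i)]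
    (hpG : ∀ i, IsPGroup p (G i))
    (hgen : ∀ i, ∃ g : Fin n → G i, Subgroup.closure (Set.range g) = ⊤) :
    (∀ w : FreeGroup (Fin n), w ≠ 1 →
      ∃ (i : ι) (φ : FreeGroup (Fin n) →* G i), Function.Surjective φ ∧ φ w ≠ 1) ↔
    ¬ ∃ (m : ℕ) (v : FreeGroup (Fin m)), v ≠ 1 ∧
        ∀ (i : ι) (h : Fin m → G i), FreeGroup.lift h v = 1 := by
  have : Fact p.Prime := ⟨hp⟩
  constructor
  · rintro hres ⟨m, v, hv, hid⟩
    have : Nontrivial (Fin n) := Fin.nontrivial_iff_two_le.mpr hn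
    obtain ⟨u, hu⟩ := FreeGroup.exists_lift_ne_one (β := Fin n) hv
    obtain ⟨i, φ, -, hφ⟩ := hres _ hu
    exact hφ (by rw [FreeGroup.apply_lift_s14]; exact hid i _)
  · intro hno w hw
    by_contra! hker
    have hprob (i : ι) : 1 / (p : ℝ) ^ n ≤ wordProb (G i) w :=
      (hpG i).one_div_pow_le_wordProb (hgen i) fun h hh =>
        hker i _ (FreeGroup.lift_surjective_iff_closure_range_eq_top.mpr hh)
    obtain ⟨m, v, hv, hvid⟩ := hProblem2 n w hw n (by omega) _
      (one_div_pos.mpr (pow_pos (Nat.cast_pos.mpr hp.pos) n))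
    exact hno ⟨m, v, hv, fun i => hvid (G i) (hgen i) (hprob i)⟩
end
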